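/- arXiv:math/0509465 — 5 statements merged into one kernel-verified Lean document; each statement's English description precedes it below -/
import Mathlib

section
/- For every nonnegative integer n, Σ_{ν=0}^{n} ((1/2)_ν^3 / ν!^3) · ((1/2)_{n-ν} / (n-ν)!) = Σ_{ν=0}^{n} ((1/4)_ν (3/4)_{n-ν} / (ν! (n-ν)!))^2, where (x)_k denotes the Pochhammer symbol. -/
open Nat

/-- Pochhammer symbol `(x)_n = x(x+1)⋯(x+n-1)` over the rationals. -/
noncomputable def pochQ (x : ℚ) (n : ℕ) : ℚ := (ascPochhammer ℚ n).eval x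

noncomputable def bQ (k : ℕ) : ℚ := pochQ (1/2) k / (k ! : ℚ)
noncomputable def DQ (k : ℕ) : ℚ := (pochQ (1/4) k / (k ! : ℚ))^2
noncomputable def EQ (k : ℕ) : ℚ := (pochQ (3/4) k / (k ! : ℚ))^2
noncomputable def aQ (k : ℕ) : ℚ := pochQ (1/2) k ^ 3 / (k ! : ℚ)^3

lemma pochQ_succ (x : ℚ) (k : ℕ) : pochQ x (k+1) = pochQ x k * (x + k) := by
  unfold pochQ
  rw [ascPochhammer_succ_right]
  simp

lemma fact_ne (k : ℕ) : ((k ! : ℚ)) ≠ 0 := by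
  exact_mod_cast (Nat.factorial_ne_zero k)

lemma pochQ_zero (x : ℚ) : pochQ x 0 = 1 := by simp [pochQ]

lemma bQ_succ (k : ℕ) : bQ (k+1) = bQ k * ((2*k+1)/(2*k+2)) := by
  unfold bQ
  rw [pochQ_succ, Nat.factorial_succ]
  have h1 := fact_ne k
  have h2 : ((k:ℚ)+1) ≠ 0 := by positivity
  push_cast
  field_simp
  ring

lemma DQ_succ (k : ℕ) : DQ (k+1) = DQ k * ((4*k+1)/(4*k+4))^2 := by
  unfold DQ
  rw [pochQ_succ, Nat.factorial_succ]
  have h1 := fact_ne k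
  have h2 : ((k:ℚ)+1) ≠ 0 := by positivity
  push_cast
  field_simp
  ring

lemma EQ_succ (k : ℕ) : EQ (k+1) = EQ k * ((4*k+3)/(4*k+4))^2 := by
  unfold EQ
  rw [pochQ_succ, Nat.factorial_succ]
  have h1 := fact_ne k
  have h2 : ((k:ℚ)+1) ≠ 0 := by positivity
  push_cast
  field_simp
  ring

lemma aQ_succ (k : ℕ) : aQ (k+1) = aQ k * ((2*k+1)/(2*k+2))^3 := by
  unfold aQ
  rw [pochQ_succ, Nat.factorial_succ]
  have h1 := fact_ne k
  have h2 : ((k:ℚ)+1) ≠ 0 := by positivity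
  push_cast
  field_simp
  ring

lemma clausen_perk (k m : ℕ) :
    8*((k:ℚ)+m+1)^3 * (DQ k * DQ (m+1)) - (2*((k:ℚ)+m)+1)^3 * (DQ k * DQ m)
    = (8*((k:ℚ)+1)^2*(2*((k:ℚ)+1)-3-3*((k:ℚ)+m))) * DQ (k+1) * DQ m
      - (8*(k:ℚ)^2*(2*(k:ℚ)-3-3*((k:ℚ)+m))) * DQ k * DQ (m+1) := by
  rw [DQ_succ k, DQ_succ m]
  have h1 : (4*(k:ℚ)+4) ≠ 0 := by positivity
  have h2 : (4*(m:ℚ)+4) ≠ 0 := by positivity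
  field_simp
  ring

lemma euler_perk (k m : ℕ) :
    16*((k:ℚ)+m+1)^2 * (bQ k * DQ (m+1)) - (4*((k:ℚ)+m)+3)^2 * (bQ k * DQ m)
    = (16*((k:ℚ)+1)*(((k:ℚ)+1)-2-2*((k:ℚ)+m))) * bQ (k+1) * DQ m
      - (16*(k:ℚ)*((k:ℚ)-2-2*((k:ℚ)+m))) * bQ k * DQ (m+1) := by
  rw [bQ_succ k, DQ_succ m]
  have h1 : (2*(k:ℚ)+2) ≠ 0 := by positivity
  have h2 : (4*(m:ℚ)+4) ≠ 0 := by positivity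
  field_simp
  ring

lemma clausen_step (n : ℕ) :
    8*((n:ℚ)+1)^3 * ∑ k ∈ Finset.range (n+2), DQ k * DQ (n+1-k)
      = (2*(n:ℚ)+1)^3 * ∑ k ∈ Finset.range (n+1), DQ k * DQ (n-k) := by
  set g : ℕ → ℚ := fun k => (8*(k:ℚ)^2*(2*(k:ℚ)-3-3*(n:ℚ))) * DQ k * DQ (n+1-k) with hg
  have tele : ∑ k ∈ Finset.range (n+1), (g (k+1) - g k) = g (n+1) - g 0 :=
    Finset.sum_range_sub g (n+1)
  have perk : ∀ k ∈ Finset.range (n+1),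
      8*((n:ℚ)+1)^3 * (DQ k * DQ (n+1-k)) - (2*(n:ℚ)+1)^3 * (DQ k * DQ (n-k))
        = g (k+1) - g k := by
    intro k hk
    rw [Finset.mem_range] at hk
    have hk' : k ≤ n := Nat.lt_succ_iff.mp hk
    obtain ⟨m, hm⟩ : ∃ m, n = k + m := ⟨n - k, by omega⟩
    subst hm
    have e1 : k + m + 1 - k = m + 1 := by omega
    have e2 : k + m - k = m := by omega
    have e3 : k + m + 1 - (k + 1) = m := by omega
    have cast1 : ((k + m : ℕ) : ℚ) = (k:ℚ) + m := by push_cast; ring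
    rw [hg]
    simp only [e1, e2, e3, cast1]
    have := clausen_perk k m
    push_cast at this ⊢
    linarith [this]
  rw [Finset.sum_range_succ]
  have key : ∑ k ∈ Finset.range (n+1),
      (8*((n:ℚ)+1)^3 * (DQ k * DQ (n+1-k)) - (2*(n:ℚ)+1)^3 * (DQ k * DQ (n-k)))
      = g (n+1) - g 0 := by
    rw [← tele]; exact Finset.sum_congr rfl perk
  rw [Finset.sum_sub_distrib, ← Finset.mul_sum, ← Finset.mul_sum] at key
  have hg0 : g 0 = 0 := by simp [hg]
  have e4 : n + 1 - (n + 1) = 0 := by omega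
  have hgn : g (n+1) = -(8*((n:ℚ)+1)^3) * DQ (n+1) := by
    rw [hg]
    have e5 : n + 1 - (n + 1) = 0 := by omega
    simp only [e5, DQ, pochQ_zero]
    push_cast
    simp [Nat.factorial_zero]
    ring
  rw [e4]
  have hD0 : DQ 0 = 1 := by simp [DQ, pochQ_zero]
  rw [hgn, hg0] at key
  rw [hD0]
  linarith [key]

lemma euler_step (n : ℕ) :
    16*((n:ℚ)+1)^2 * ∑ k ∈ Finset.range (n+2), bQ k * DQ (n+1-k)
      = (4*(n:ℚ)+3)^2 * ∑ k ∈ Finset.range (n+1), bQ k * DQ (n-k) := by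
  set g : ℕ → ℚ := fun k => (16*(k:ℚ)*((k:ℚ)-2-2*(n:ℚ))) * bQ k * DQ (n+1-k) with hg
  have tele : ∑ k ∈ Finset.range (n+1), (g (k+1) - g k) = g (n+1) - g 0 :=
    Finset.sum_range_sub g (n+1)
  have perk : ∀ k ∈ Finset.range (n+1),
      16*((n:ℚ)+1)^2 * (bQ k * DQ (n+1-k)) - (4*(n:ℚ)+3)^2 * (bQ k * DQ (n-k))
        = g (k+1) - g k := by
    intro k hk
    rw [Finset.mem_range] at hk
    have hk' : k ≤ n := Nat.lt_succ_iff.mp hk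
    obtain ⟨m, hm⟩ : ∃ m, n = k + m := ⟨n - k, by omega⟩
    subst hm
    have e1 : k + m + 1 - k = m + 1 := by omega
    have e2 : k + m - k = m := by omega
    have e3 : k + m + 1 - (k + 1) = m := by omega
    have cast1 : ((k + m : ℕ) : ℚ) = (k:ℚ) + m := by push_cast; ring
    rw [hg]
    simp only [e1, e2, e3, cast1]
    have := euler_perk k m
    push_cast at this ⊢
    linarith [this]
  rw [Finset.sum_range_succ]
  have key : ∑ k ∈ Finset.range (n+1),
      (16*((n:ℚ)+1)^2 * (bQ k * DQ (n+1-k)) - (4*(n:ℚ)+3)^2 * (bQ k * DQ (n-k)))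
      = g (n+1) - g 0 := by
    rw [← tele]; exact Finset.sum_congr rfl perk
  rw [Finset.sum_sub_distrib, ← Finset.mul_sum, ← Finset.mul_sum] at key
  have hg0 : g 0 = 0 := by simp [hg]
  have e4 : n + 1 - (n + 1) = 0 := by omega
  have hgn : g (n+1) = -(16*((n:ℚ)+1)^2) * bQ (n+1) := by
    rw [hg]
    have e5 : n + 1 - (n + 1) = 0 := by omega
    simp only [e5, DQ, pochQ_zero]
    push_cast
    simp [Nat.factorial_zero]
    ring
  rw [e4]
  have hD0 : DQ 0 = 1 := by simp [DQ, pochQ_zero]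
  rw [hgn, hg0] at key
  rw [hD0]
  linarith [key]

lemma clausen (n : ℕ) : ∑ k ∈ Finset.range (n+1), DQ k * DQ (n-k) = aQ n := by
  induction n with
  | zero => simp [DQ, aQ, pochQ_zero]
  | succ n ih =>
    have step := clausen_step n
    rw [ih] at step
    have h8 : (8:ℚ)*((n:ℚ)+1)^3 ≠ 0 := by positivity
    have target : 8*((n:ℚ)+1)^3 * aQ (n+1) = (2*(n:ℚ)+1)^3 * aQ n := by
      rw [aQ_succ]
      have h2 : (2*(n:ℚ)+2) ≠ 0 := by positivity
      field_simp
      ring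
    have := step.trans target.symm
    exact mul_left_cancel₀ h8 this

lemma euler (n : ℕ) : ∑ k ∈ Finset.range (n+1), bQ k * DQ (n-k) = EQ n := by
  induction n with
  | zero => simp [bQ, DQ, EQ, pochQ_zero]
  | succ n ih =>
    have step := euler_step n
    rw [ih] at step
    have h16 : (16:ℚ)*((n:ℚ)+1)^2 ≠ 0 := by positivity
    have target : 16*((n:ℚ)+1)^2 * EQ (n+1) = (4*(n:ℚ)+3)^2 * EQ n := by
      rw [EQ_succ]
      have h2 : (4*(n:ℚ)+4) ≠ 0 := by positivity
      field_simp
      ring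
    have := step.trans target.symm
    exact mul_left_cancel₀ h16 this

open PowerSeries in
lemma key_identity (n : ℕ) :
    ∑ k ∈ Finset.range (n+1), aQ k * bQ (n-k)
      = ∑ k ∈ Finset.range (n+1), DQ k * EQ (n-k) := by
  have hA : (PowerSeries.mk DQ) * (PowerSeries.mk DQ) = PowerSeries.mk aQ := by
    ext m
    rw [PowerSeries.coeff_mul, Finset.Nat.sum_antidiagonal_eq_sum_range_succ_mk]
    simpa [PowerSeries.coeff_mk] using clausen m
  have hE : (PowerSeries.mk bQ) * (PowerSeries.mk DQ) = PowerSeries.mk EQ := by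
    ext m
    rw [PowerSeries.coeff_mul, Finset.Nat.sum_antidiagonal_eq_sum_range_succ_mk]
    simpa [PowerSeries.coeff_mk] using euler m
  have hprod : (PowerSeries.mk aQ) * (PowerSeries.mk bQ)
      = (PowerSeries.mk DQ) * (PowerSeries.mk EQ) := by
    rw [← hA, ← hE]; ring
  have h1 : (PowerSeries.coeff n) ((PowerSeries.mk aQ) * (PowerSeries.mk bQ))
      = ∑ k ∈ Finset.range (n+1), aQ k * bQ (n-k) := by
    rw [PowerSeries.coeff_mul, Finset.Nat.sum_antidiagonal_eq_sum_range_succ_mk]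
    simp [PowerSeries.coeff_mk]
  have h2 : (PowerSeries.coeff n) ((PowerSeries.mk DQ) * (PowerSeries.mk EQ))
      = ∑ k ∈ Finset.range (n+1), DQ k * EQ (n-k) := by
    rw [PowerSeries.coeff_mul, Finset.Nat.sum_antidiagonal_eq_sum_range_succ_mk]
    simp [PowerSeries.coeff_mk]
  rw [← h1, ← h2, hprod]

/-- Identity (7): the two expressions for `u_n` agree. -/
theorem u_eq_sum_of_squares (n : ℕ) :
    (∑ ν ∈ Finset.range (n + 1),
        (pochQ (1 / 2) ν) ^ 3 / ((ν ! : ℚ)) ^ 3 *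
          (pochQ (1 / 2) (n - ν) / ((n - ν)! : ℚ)))
    = ∑ ν ∈ Finset.range (n + 1),
        (pochQ (1 / 4) ν * pochQ (3 / 4) (n - ν) / ((ν ! : ℚ) * ((n - ν)! : ℚ))) ^ 2 := by
  have lhs_eq : ∀ ν : ℕ,
      (pochQ (1 / 2) ν) ^ 3 / ((ν ! : ℚ)) ^ 3 *
          (pochQ (1 / 2) (n - ν) / ((n - ν)! : ℚ)) = aQ ν * bQ (n - ν) := by
    intro ν; rfl
  have rhs_eq : ∀ ν : ℕ,
      (pochQ (1 / 4) ν * pochQ (3 / 4) (n - ν) / ((ν ! : ℚ) * ((n - ν)! : ℚ))) ^ 2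
        = DQ ν * EQ (n - ν) := by
    intro ν
    unfold DQ EQ
    ring
  simp only [lhs_eq, rhs_eq]
  exact key_identity n
end

section
/- Define u_n = Σ_{ν=0}^{n} ((1/2)_ν^3 / ν!^3) · ((1/2)_{n-ν} / (n-ν)!) for n ≥ 0, where (x)_k denotes the Pochhammer symbol. Then for every integer n ≥ 1, the recurrence 8(n+1)^3 u_{n+1} - (2n+1)(8n^2+8n+5) u_n + 8n^3 u_{n-1} = 0 holds. -/
/-!
Write `c m = (1/2)_m / m!` (`pochHalfDivFact`), so that `u n = ∑_{ν ≤ n} c ν ^ 3 * c (n - ν)`.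
Creative telescoping (Zeilberger): applied to the summand, the recurrence operator gives
`G n (ν+1) - G n ν` for `ν < n`, with certificate (`wzCertificate`)
`G n ν = 8 ν³ c ν ^ 3 c (n+1-ν) / (2(n-ν)+1)`. Summing over `ν < n` leaves `G n n = 4 n³ c n ^ 3`,
which cancels against the terms `ν = n, n+1` of `u (n+1)` and `u n`, because `c` satisfies
`(2m+2) c (m+1) = (2m+1) c m`.
-/

open Nat

/-- The sequence `u_n` from identity (7). -/
noncomputable def u (n : ℕ) : ℚ :=
  ∑ ν ∈ Finset.range (n + 1),
    (pochQ (1 / 2) ν) ^ 3 / ((ν ! : ℚ)) ^ 3 * (pochQ (1 / 2) (n - ν) / ((n - ν)! : ℚ))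

open Finset

noncomputable def pochHalfDivFact (m : ℕ) : ℚ := pochQ (1 / 2) m / (m ! : ℚ)

lemma pochHalfDivFact_zero : pochHalfDivFact 0 = 1 := by
  simp [pochHalfDivFact, pochQ]

lemma pochHalfDivFact_succ (m : ℕ) :
    pochHalfDivFact (m + 1) = pochHalfDivFact m * (2 * m + 1) / (2 * m + 2) := by
  have hm : (m : ℚ) + 1 ≠ 0 := by positivity
  have hfact : (m ! : ℚ) ≠ 0 := by positivity
  simp only [pochHalfDivFact, pochQ, ascPochhammer_succ_eval, Nat.factorial_succ]
  push_cast
  field_simp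
  ring

lemma pochHalfDivFact_one : pochHalfDivFact 1 = 1 / 2 := by
  simp [pochHalfDivFact_succ 0, pochHalfDivFact_zero]

lemma mul_pochHalfDivFact_succ (m : ℕ) :
    (2 * m + 2) * pochHalfDivFact (m + 1) = (2 * m + 1) * pochHalfDivFact m := by
  rw [pochHalfDivFact_succ]
  field_simp

lemma u_eq_sum_pochHalfDivFact (n : ℕ) :
    u n = ∑ ν ∈ range (n + 1), pochHalfDivFact ν ^ 3 * pochHalfDivFact (n - ν) := by
  simp only [u, pochHalfDivFact, div_pow]

/-- Only evaluated at `ν ≤ n`, where the truncated subtraction `n - ν` is honest. -/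
noncomputable def wzCertificate (n ν : ℕ) : ℚ :=
  8 * (ν : ℚ) ^ 3 * pochHalfDivFact ν ^ 3 * pochHalfDivFact (n + 1 - ν) / (2 * (n - ν : ℕ) + 1)

lemma recurrence_summand_eq_wzCertificate_sub {n ν : ℕ} (hν : ν < n) :
    8 * ((n : ℚ) + 1) ^ 3 * (pochHalfDivFact ν ^ 3 * pochHalfDivFact (n + 1 - ν))
      - (2 * (n : ℚ) + 1) * (8 * (n : ℚ) ^ 2 + 8 * (n : ℚ) + 5)
        * (pochHalfDivFact ν ^ 3 * pochHalfDivFact (n - ν))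
      + 8 * (n : ℚ) ^ 3 * (pochHalfDivFact ν ^ 3 * pochHalfDivFact (n - 1 - ν))
    = wzCertificate n (ν + 1) - wzCertificate n ν := by
  obtain ⟨k, rfl⟩ : ∃ k, n = ν + k + 1 := ⟨n - ν - 1, by omega⟩
  simp only [wzCertificate, show ν + k + 1 + 1 - ν = k + 2 by omega,
    show ν + k + 1 - ν = k + 1 by omega, show ν + k + 1 - 1 - ν = k by omega,
    show ν + k + 1 + 1 - (ν + 1) = k + 1 by omega, show ν + k + 1 - (ν + 1) = k by omega,
    pochHalfDivFact_succ]
  have h1 : (2 * (k : ℚ) + 1) ≠ 0 := by positivity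
  have h2 : (2 * (k : ℚ) + 2) ≠ 0 := by positivity
  have h3 : (2 * (k : ℚ) + 3) ≠ 0 := by positivity
  have h4 : (2 * (ν : ℚ) + 2) ≠ 0 := by positivity
  push_cast
  field_simp
  ring

lemma sum_recurrence_summand (n : ℕ) :
    ∑ ν ∈ range n,
      (8 * ((n : ℚ) + 1) ^ 3 * (pochHalfDivFact ν ^ 3 * pochHalfDivFact (n + 1 - ν))
        - (2 * (n : ℚ) + 1) * (8 * (n : ℚ) ^ 2 + 8 * (n : ℚ) + 5)
          * (pochHalfDivFact ν ^ 3 * pochHalfDivFact (n - ν))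
        + 8 * (n : ℚ) ^ 3 * (pochHalfDivFact ν ^ 3 * pochHalfDivFact (n - 1 - ν)))
      = 4 * (n : ℚ) ^ 3 * pochHalfDivFact n ^ 3 := by
  rw [sum_congr rfl fun ν hν => recurrence_summand_eq_wzCertificate_sub (mem_range.1 hν),
    sum_range_sub]
  simp only [wzCertificate, Nat.add_sub_cancel_left, Nat.sub_self, Nat.sub_zero,
    pochHalfDivFact_one]
  push_cast
  ring

/-- The recurrence (8) satisfied by `u_n`. -/
theorem u_recurrence (n : ℕ) (hn : 1 ≤ n) :
    8 * ((n : ℚ) + 1) ^ 3 * u (n + 1)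
      - (2 * (n : ℚ) + 1) * (8 * (n : ℚ) ^ 2 + 8 * (n : ℚ) + 5) * u n
      + 8 * (n : ℚ) ^ 3 * u (n - 1) = 0 := by
  have hsum := sum_recurrence_summand n
  rw [sum_add_distrib, sum_sub_distrib, ← mul_sum, ← mul_sum, ← mul_sum] at hsum
  have hlast := congrArg (· ^ 3) (mul_pochHalfDivFact_succ n)
  simp only [u_eq_sum_pochHalfDivFact, Nat.sub_add_cancel hn, sum_range_succ (n := n + 1),
    sum_range_succ (n := n), Nat.sub_self, show n + 1 - n = 1 by omega,
    pochHalfDivFact_zero, pochHalfDivFact_one] at hlast ⊢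
  linear_combination hsum + hlast
end

section
/- Define U_n = Σ_{k=0}^{n} C(2k,k)^3 C(2n-2k,n-k) 2^{4(n-k)} for integers n ≥ 0, where C(m,j) is the binomial coefficient. Then for every integer n ≥ 1, the recurrence (n+1)^3 U_{n+1} - 8(2n+1)(8n^2+8n+5) U_n + 4096 n^3 U_{n-1} = 0 holds. -/
/-!
Creative telescoping. Write `F(n, k)` for the `k`-th summand of `U n` and put
`G(n, k) = 32 k³ / (n - k + 1) · F(n, k)`. For `k < n` the recurrence operator applied to
`F(·, k)` equals `G(n, k + 1) - G(n, k)`; after dividing by `F`, this is an identity of rational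
functions in `n` and `k`, because consecutive central binomial coefficients have rational ratio.
Summing over `k < n` leaves `G(n, n)`, which cancels the terms `k = n, n + 1` that occur only
in `U (n + 1)` and `U n`.
-/

open Nat

/-- The integer sequence `U_n` of Theorem 3. -/
def U (n : ℕ) : ℕ :=
  ∑ k ∈ Finset.range (n + 1),
    (Nat.choose (2 * k) k) ^ 3 * Nat.choose (2 * n - 2 * k) (n - k) * 2 ^ (4 * (n - k))

open Finset

theorem centralBinom_succ_eq_mul (m : ℕ) :
    (centralBinom (m + 1) : ℚ) = 2 * (2 * m + 1) / (m + 1) * centralBinom m := by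
  have h : ((m + 1 : ℕ) : ℚ) * centralBinom (m + 1) = 2 * (2 * m + 1) * centralBinom m := by
    exact_mod_cast succ_mul_centralBinom_succ m
  push_cast at h
  field_simp
  linarith

def uSummand (n k : ℕ) : ℚ := (centralBinom k : ℚ) ^ 3 * centralBinom (n - k) * 16 ^ (n - k)

theorem U_cast_eq_sum_uSummand (n : ℕ) : (U n : ℚ) = ∑ k ∈ range (n + 1), uSummand n k := by
  rw [U, cast_sum]
  refine sum_congr rfl fun k hk => ?_
  have hsub : 2 * n - 2 * k = 2 * (n - k) := by omega
  rw [uSummand, hsub, pow_mul, ← centralBinom_eq_two_mul_choose, ← centralBinom_eq_two_mul_choose]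
  push_cast
  norm_num

def uCertificate (n k : ℕ) : ℚ := 32 * k ^ 3 / ((n - k : ℕ) + 1) * uSummand n k

theorem uSummand_telescope {n k : ℕ} (hk : k < n) :
    ((n : ℚ) + 1) ^ 3 * uSummand (n + 1) k
      - 8 * (2 * (n : ℚ) + 1) * (8 * (n : ℚ) ^ 2 + 8 * n + 5) * uSummand n k
      + 4096 * (n : ℚ) ^ 3 * uSummand (n - 1) k
    = uCertificate n (k + 1) - uCertificate n k := by
  obtain ⟨m, rfl⟩ : ∃ m, n = k + m + 1 := ⟨n - k - 1, by omega⟩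
  have h₂ : k + m + 1 + 1 - k = m + 2 := by omega
  have h₁ : k + m + 1 - k = m + 1 := by omega
  have h₀ : k + m + 1 - 1 - k = m := by omega
  have h₀' : k + m + 1 - (k + 1) = m := by omega
  simp only [uCertificate, uSummand, h₂, h₁, h₀, h₀', centralBinom_succ_eq_mul (m + 1),
    centralBinom_succ_eq_mul m, centralBinom_succ_eq_mul k]
  push_cast
  field_simp
  ring

theorem uSummand_boundary (n : ℕ) :
    ((n : ℚ) + 1) ^ 3 * (uSummand (n + 1) n + uSummand (n + 1) (n + 1))
      - 8 * (2 * (n : ℚ) + 1) * (8 * (n : ℚ) ^ 2 + 8 * n + 5) * uSummand n n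
      + uCertificate n n = 0 := by
  have hcb₁ : centralBinom 1 = 2 := rfl
  simp only [uCertificate, uSummand, Nat.sub_self, Nat.add_sub_cancel_left,
    centralBinom_succ_eq_mul n, centralBinom_zero, hcb₁]
  push_cast
  field_simp
  ring

theorem U_recurrence_general (n : ℕ) :
    ((n : ℤ) + 1) ^ 3 * (U (n + 1) : ℤ)
      - 8 * (2 * (n : ℤ) + 1) * (8 * (n : ℤ) ^ 2 + 8 * (n : ℤ) + 5) * (U n : ℤ)
      + 4096 * (n : ℤ) ^ 3 * (U (n - 1) : ℤ) = 0 := by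
  have htel : ∑ k ∈ range n,
      (((n : ℚ) + 1) ^ 3 * uSummand (n + 1) k
        - 8 * (2 * (n : ℚ) + 1) * (8 * (n : ℚ) ^ 2 + 8 * n + 5) * uSummand n k
        + 4096 * (n : ℚ) ^ 3 * uSummand (n - 1) k) = uCertificate n n := by
    rw [sum_congr rfl fun k hk => uSummand_telescope (mem_range.1 hk), sum_range_sub]
    simp [uCertificate]
  rw [sum_add_distrib, sum_sub_distrib, ← mul_sum, ← mul_sum, ← mul_sum] at htel
  -- at `n = 0` the truncated `U (n - 1) = U 0` is killed by the factor `n ^ 3`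
  have hprev : (n : ℚ) ^ 3 * U (n - 1) = n ^ 3 * ∑ k ∈ range n, uSummand (n - 1) k := by
    cases n <;> simp [U_cast_eq_sum_uSummand]
  qify
  rw [mul_assoc 4096, hprev, U_cast_eq_sum_uSummand, U_cast_eq_sum_uSummand, sum_range_succ,
    sum_range_succ, sum_range_succ (n := n)]
  linear_combination htel + uSummand_boundary n

/-- The recurrence relation satisfied by `U_n` (Theorem 3). -/
theorem U_recurrence (n : ℕ) (hn : 1 ≤ n) :
    ((n : ℤ) + 1) ^ 3 * (U (n + 1) : ℤ)
      - 8 * (2 * (n : ℤ) + 1) * (8 * (n : ℤ) ^ 2 + 8 * (n : ℤ) + 5) * (U n : ℤ)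
      + 4096 * (n : ℤ) ^ 3 * (U (n - 1) : ℤ) = 0 :=
  U_recurrence_general n
end

section
/- Let a, d, e be complex numbers such that none of 1+a-d and 1+a-e is a nonpositive integer and such that e-a-n, 1+a-e are nonzero in all the denominators below, and let n be a nonnegative integer. Then the terminating Saalschützian series satisfies ₃F₂(-n, a+n, 1+a-d-e; 1+a-d, 1+a-e; 1) = (d)_n (e)_n / ((1+a-d)_n (1+a-e)_n), where ₃F₂(-n, a+n, c; b₁, b₂; 1) = Σ_{ν=0}^{n} (-n)_ν (a+n)_ν (c)_ν / (ν! (b₁)_ν (b₂)_ν) and (x)_k is the Pochhammer symbol. -/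
open Nat

/-- Pochhammer symbol `(x)_n = x(x+1)⋯(x+n-1)` over the complex numbers. -/
noncomputable def poch (x : ℂ) (n : ℕ) : ℂ := (ascPochhammer ℂ n).eval x

lemma poch_zero (x : ℂ) : poch x 0 = 1 := by simp [poch]
lemma poch_succ (x : ℂ) (n : ℕ) : poch x (n+1) = poch x n * (x + n) := by
  simp [poch, ascPochhammer_succ_right]
lemma poch_succ_left (x : ℂ) (n : ℕ) : poch x (n+1) = x * poch (x+1) n := by
  simp [poch, ascPochhammer_succ_left, Polynomial.eval_comp]

lemma poch_add (x : ℂ) (m k : ℕ) : poch x (m+k) = poch x m * poch (x+m) k := by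
  induction k with
  | zero => simp [poch_zero]
  | succ k ih => rw [← Nat.add_assoc, poch_succ, ih, poch_succ]; push_cast; ring
lemma poch_ne (x : ℂ) (m : ℕ) (h : ∀ j : ℕ, j < m → x + j ≠ 0) : poch x m ≠ 0 := by
  induction m with
  | zero => simp [poch_zero]
  | succ m ih =>
    rw [poch_succ]
    exact mul_ne_zero (ih fun j hj => h j (hj.trans m.lt_succ_self)) (h m m.lt_succ_self)

noncomputable def UU (a d e : ℂ) (n k : ℕ) : ℂ :=
  (-1)^k * (n.choose k) * poch (a + n) k * poch (1+a-d-e) k *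
    poch (1+a-d+k) (n-k) * poch (1+a-e+k) (n-k)

noncomputable def VV (a d e : ℂ) (n j : ℕ) : ℂ :=
  (a + 2*n + 1) * (-1)^j * (n.choose j) * poch (a+n+1) j * poch (1+a-d-e) j *
    (1+a-d-e+j) * poch (1+a-d+j) (n-j) * poch (1+a-e+j) (n-j)

lemma wz0 (a d e : ℂ) (n : ℕ) :
    UU a d e (n+1) 0 - (d+n)*(e+n)*UU a d e n 0 = VV a d e n 0 := by
  simp only [UU, VV, pow_zero, Nat.choose_zero_right, Nat.cast_zero, Nat.cast_one,
    add_zero, Nat.sub_zero, poch_zero, one_mul, mul_one]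
  rw [poch_succ (1+a-d) n, poch_succ (1+a-e) n]
  push_cast
  ring

lemma wz_top (a d e : ℂ) (n : ℕ) :
    UU a d e (n+1) (n+1) - (d+n)*(e+n)*UU a d e n (n+1) = VV a d e n (n+1) - VV a d e n n := by
  simp only [UU, VV, Nat.choose_self, Nat.choose_succ_self, Nat.cast_zero, Nat.cast_one,
    Nat.sub_self, poch_zero, Nat.add_sub_cancel_left, mul_zero, zero_mul, mul_one, one_mul,
    sub_zero]
  have h1 : poch (a + ↑(n+1)) (n+1) = poch (a+↑n+1) n * (a + ↑n + 1 + n) := by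
    rw [poch_succ]; push_cast; ring_nf
  have h2 : poch (1+a-d-e) (n+1) = poch (1+a-d-e) n * (1+a-d-e+n) := poch_succ _ n
  rw [h1, h2]
  push_cast
  ring

lemma wz_mid (a d e : ℂ) (n k : ℕ) (hk : k + 1 ≤ n) :
    UU a d e (n+1) (k+1) - (d+n)*(e+n)*UU a d e n (k+1) = VV a d e n (k+1) - VV a d e n k := by
  obtain ⟨m, rfl⟩ := Nat.exists_eq_add_of_le hk
  -- n = (k+1) + m
  have s1 : (k+1) + m - (k+1) = m := by omega
  have s2 : (k+1) + m + 1 - (k+1) = m + 1 := by omega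
  have s3 : (k+1) + m - k = m + 1 := by omega
  simp only [UU, VV, s1, s2, s3]
  have p1 : poch (a + ↑((k+1)+m+1)) (k+1) = poch (a + ↑((k+1)+m) + 1) k * (a + ↑((k+1)+m) + 1 + k) := by
    rw [poch_succ]; push_cast; ring_nf
  have p2 : poch (a + ↑((k+1)+m)) (k+1) = (a + ↑((k+1)+m)) * (poch (a + ↑((k+1)+m) + 1) k) := by
    rw [poch_succ_left]
  have p3 : poch (a + ↑((k+1)+m) + 1) (k+1) = poch (a + ↑((k+1)+m) + 1) k * (a + ↑((k+1)+m) + 1 + k) := by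
    rw [poch_succ]
  have p4 : poch (1+a-d-e) (k+1) = poch (1+a-d-e) k * (1+a-d-e+k) := poch_succ _ k
  have p5 : poch (1+a-d+↑(k+1)) (m+1) = poch (1+a-d+↑(k+1)) m * (1+a-d+↑(k+1)+m) := poch_succ _ m
  have p6 : poch (1+a-e+↑(k+1)) (m+1) = poch (1+a-e+↑(k+1)) m * (1+a-e+↑(k+1)+m) := poch_succ _ m
  have p7 : poch (1+a-d+↑k) (m+1) = (1+a-d+↑k) * poch (1+a-d+↑(k+1)) m := by
    rw [poch_succ_left]; push_cast; ring_nf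
  have p8 : poch (1+a-e+↑k) (m+1) = (1+a-e+↑k) * poch (1+a-e+↑(k+1)) m := by
    rw [poch_succ_left]; push_cast; ring_nf
  rw [p1, p2, p3, p4, p5, p6, p7, p8]
  have f1n : ((k+1)+m).choose (k+1) * ((k+1)+m+1) = ((k+1)+m+1).choose (k+1) * (m+1) := by
    have h := Nat.choose_mul_succ_eq ((k+1)+m) (k+1)
    rwa [s2] at h
  have f2n : ((k+1)+m).choose (k+1) * (k+1) = ((k+1)+m).choose k * (m+1) := by
    have h := Nat.choose_succ_right_eq ((k+1)+m) k
    rwa [s3] at h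
  have hm : ((m : ℂ) + 1) ≠ 0 := by
    have : ((m+1 : ℕ) : ℂ) ≠ 0 := Nat.cast_ne_zero.mpr (Nat.succ_ne_zero m)
    push_cast at this; exact this
  have f1 : (((k+1)+m).choose (k+1) : ℂ) * ((k:ℂ)+1+(m:ℂ)+1) = (((k+1)+m+1).choose (k+1) : ℂ) * ((m:ℂ)+1) := by
    have := congrArg (Nat.cast : ℕ → ℂ) f1n
    push_cast at this
    linear_combination this
  have f2 : (((k+1)+m).choose (k+1) : ℂ) * ((k:ℂ)+1) = (((k+1)+m).choose k : ℂ) * ((m:ℂ)+1) := by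
    have := congrArg (Nat.cast : ℕ → ℂ) f2n
    push_cast at this
    linear_combination this
  have e2 : (((k+1)+m+1).choose (k+1) : ℂ) = (((k+1)+m).choose (k+1) : ℂ) * ((k:ℂ)+1+(m:ℂ)+1) / ((m:ℂ)+1) := by
    rw [eq_div_iff hm]; linear_combination -f1
  have e0 : (((k+1)+m).choose k : ℂ) = (((k+1)+m).choose (k+1) : ℂ) * ((k:ℂ)+1) / ((m:ℂ)+1) := by
    rw [eq_div_iff hm]; linear_combination -f2
  rw [e2, e0]
  push_cast
  field_simp
  ring

lemma UU_top (a d e : ℂ) (n : ℕ) : UU a d e n (n+1) = 0 := by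
  simp [UU, Nat.choose_succ_self]

lemma VV_top (a d e : ℂ) (n : ℕ) : VV a d e n (n+1) = 0 := by
  simp [VV, Nat.choose_succ_self]

lemma key_id (a d e : ℂ) : ∀ n : ℕ,
    ∑ k ∈ Finset.range (n+1), UU a d e n k = poch d n * poch e n := by
  intro n
  induction n with
  | zero => simp [UU, poch_zero]
  | succ n ih =>
    have tele : ∑ k ∈ Finset.range (n+2),
        (UU a d e (n+1) k - (d+n)*(e+n) * UU a d e n k) = 0 := by
      have step : ∀ i ∈ Finset.range (n+1),
          UU a d e (n+1) (i+1) - (d+n)*(e+n) * UU a d e n (i+1)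
            = VV a d e n (i+1) - VV a d e n i := by
        intro i hi
        rcases Nat.lt_or_ge (i+1) (n+1) with h | h
        · exact wz_mid a d e n i (by omega)
        · have : i = n := by simp at hi; omega
          subst this
          exact wz_top a d e i
      rw [Finset.sum_range_succ']
      rw [Finset.sum_congr rfl step, Finset.sum_range_sub (fun j => VV a d e n j)]
      rw [wz0 a d e n]
      rw [VV_top]
      ring
    rw [Finset.sum_sub_distrib, ← Finset.mul_sum, sub_eq_zero] at tele
    rw [tele]
    rw [Finset.sum_range_succ, UU_top, add_zero, ih]
    rw [poch_succ, poch_succ]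
    ring

lemma poch_neg_nat : ∀ (ν m : ℕ),
    poch (-(((ν+m : ℕ)) : ℂ)) ν * ((m ! : ℕ) : ℂ) = (-1)^ν * (((ν+m)! : ℕ) : ℂ) := by
  intro ν
  induction ν with
  | zero => intro m; simp [poch_zero]
  | succ ν ih =>
    intro m
    have hcast : (((ν+(m+1) : ℕ)) : ℂ) = (((ν+1+m : ℕ)) : ℂ) := by push_cast; ring
    have IH := ih (m+1)
    rw [hcast] at IH
    rw [poch_succ]
    have hfac : (((ν+1+m)! : ℕ) : ℂ) = (((ν+(m+1))! : ℕ) : ℂ) := by norm_num; ring_nf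
    have hfac2 : (((m+1)! : ℕ) : ℂ) = ((m+1 : ℕ) : ℂ) * ((m ! : ℕ) : ℂ) := by
      rw [Nat.factorial_succ]; push_cast; ring
    push_cast at IH hfac hfac2 ⊢
    have hx : (-(↑ν + 1 + (m:ℂ)) + ↑ν) = -((m:ℂ)+1) := by ring
    rw [hx]
    linear_combination (-1 : ℂ) * IH + ((-1:ℂ))^ν * hfac + poch (-(↑ν + 1 + (m:ℂ))) ν * hfac2

/-- The Pfaff–Saalschütz evaluation of the terminating Saalschützian `₃F₂` at `1`. -/
theorem pfaff_saalschuetz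
    (a d e : ℂ) (n : ℕ)
    (hd : ∀ m : ℕ, 1 + a - d ≠ -(m : ℂ))
    (he : ∀ m : ℕ, 1 + a - e ≠ -(m : ℂ))
    (hean : ∀ k : ℕ, k < n → e - a - (n : ℂ) + (k : ℂ) ≠ 0) :
    (∑ ν ∈ Finset.range (n + 1),
        (poch (-(n : ℂ)) ν * poch (a + (n : ℂ)) ν * poch (1 + a - d - e) ν) /
          ((ν ! : ℂ) * poch (1 + a - d) ν * poch (1 + a - e) ν))
    = (poch d n * poch e n) / (poch (1 + a - d) n * poch (1 + a - e) n) := by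
  have hb1 : ∀ j : ℕ, 1 + a - d + (j : ℂ) ≠ 0 := by
    intro j h; exact hd j (by linear_combination h)
  have hb2 : ∀ j : ℕ, 1 + a - e + (j : ℂ) ≠ 0 := by
    intro j h; exact he j (by linear_combination h)
  have term : ∀ ν ∈ Finset.range (n+1),
      (poch (-(n : ℂ)) ν * poch (a + (n : ℂ)) ν * poch (1 + a - d - e) ν) /
          ((ν ! : ℂ) * poch (1 + a - d) ν * poch (1 + a - e) ν)
      = UU a d e n ν / (poch (1 + a - d) n * poch (1 + a - e) n) := by
    intro ν hν
    have hνn : ν ≤ n := by simp at hν; omega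
    obtain ⟨m, rfl⟩ := Nat.exists_eq_add_of_le hνn
    have s1 : ν + m - ν = m := by omega
    have q1 : poch (1+a-d) ν ≠ 0 := poch_ne _ _ fun j _ => hb1 j
    have q2 : poch (1+a-e) ν ≠ 0 := poch_ne _ _ fun j _ => hb2 j
    have q1' : poch (1+a-d+(ν:ℂ)) m ≠ 0 := by
      refine poch_ne _ _ fun j _ h => hb1 (ν + j) ?_
      push_cast; linear_combination h
    have q2' : poch (1+a-e+(ν:ℂ)) m ≠ 0 := by
      refine poch_ne _ _ fun j _ h => hb2 (ν + j) ?_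
      push_cast; linear_combination h
    have hfν : ((ν ! : ℕ) : ℂ) ≠ 0 := Nat.cast_ne_zero.mpr (Nat.factorial_ne_zero ν)
    have hfm : ((m ! : ℕ) : ℂ) ≠ 0 := Nat.cast_ne_zero.mpr (Nat.factorial_ne_zero m)
    have split1 : poch (1+a-d) (ν+m) = poch (1+a-d) ν * poch (1+a-d+(ν:ℂ)) m := poch_add _ ν m
    have split2 : poch (1+a-e) (ν+m) = poch (1+a-e) ν * poch (1+a-e+(ν:ℂ)) m := poch_add _ ν m
    have pn : poch (-(((ν+m : ℕ)) : ℂ)) ν = (-1)^ν * (((ν+m)! : ℕ) : ℂ) / ((m ! : ℕ) : ℂ) := by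
      rw [eq_div_iff hfm]; exact poch_neg_nat ν m
    have hch : (((ν+m).choose ν : ℕ) : ℂ) = (((ν+m)! : ℕ) : ℂ) / (((ν ! : ℕ) : ℂ) * ((m ! : ℕ) : ℂ)) := by
      rw [eq_div_iff (mul_ne_zero hfν hfm), ← mul_assoc]
      have hn := Nat.choose_mul_factorial_mul_factorial (Nat.le_add_right ν m)
      rw [s1] at hn
      exact_mod_cast congrArg (Nat.cast : ℕ → ℂ) hn
    simp only [UU, s1, split1, split2, pn, hch]
    field_simp
  rw [Finset.sum_congr rfl term, ← Finset.sum_div, key_id]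
end

section
/- Let (C_n)_{n≥0} be a sequence of complex numbers and suppose that for z in a neighbourhood of 0 (excluding z = 1) the series g(z) = (1-z)^{-1/2} Σ_{n≥0} C_n (-4z/(1-z)^2)^n converges and may be differentiated termwise. Then, with θ = z d/dz, one has θ²g(z) = (1-z)^{-1/2} Σ_{n≥0} C_n · (n²(1+z)²/(1-z)² + n·z(3+z)/(1-z)² + z(2+z)/(4(1-z)²)) · (-4z/(1-z)^2)^n. -/
set_option maxHeartbeats 1000000


open Nat

noncomputable def Wf (z : ℂ) : ℂ := -4 * z / (1 - z) ^ 2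
noncomputable def Wf1 (z : ℂ) : ℂ := -4 * (1 + z) / (1 - z) ^ 3
noncomputable def Wf2 (z : ℂ) : ℂ := -8 * (2 + z) / (1 - z) ^ 4
noncomputable def Sf0 (z : ℂ) : ℂ := (1 - z) ^ (-(1 / 2 : ℂ))
noncomputable def Sf1 (z : ℂ) : ℂ := (1 / 2 : ℂ) * (1 - z) ^ (-(3 / 2 : ℂ))
noncomputable def Sf2 (z : ℂ) : ℂ := (3 / 4 : ℂ) * (1 - z) ^ (-(5 / 2 : ℂ))

lemma one_sub_ne {z : ℂ} (h : ‖z‖ < 1) : (1 : ℂ) - z ≠ 0 := by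
  intro hz
  have : z = 1 := by linear_combination -hz
  simp [this] at h

lemma one_sub_re_pos {z : ℂ} (h : ‖z‖ < 1) : 0 < (1 - z).re := by
  have h1 : |z.re| ≤ ‖z‖ := Complex.abs_re_le_norm z
  have : z.re < 1 := lt_of_le_of_lt (le_trans (le_abs_self _) h1) h
  simp [Complex.sub_re, Complex.one_re]
  linarith

lemma hd_Sf0 {z : ℂ} (h : ‖z‖ < 1) : HasDerivAt Sf0 (Sf1 z) z := by
  have h0 : HasDerivAt (fun z : ℂ => 1 - z) (-1) z := by
    simpa using (hasDerivAt_id z).const_sub 1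
  have := h0.cpow_const (c := -(1 / 2 : ℂ)) (Or.inl (one_sub_re_pos h))
  have e : (-(1/2 : ℂ) - 1) = -(3/2 : ℂ) := by norm_num
  unfold Sf0 Sf1
  convert this using 1
  rw [e]; ring

lemma hd_Sf1 {z : ℂ} (h : ‖z‖ < 1) : HasDerivAt Sf1 (Sf2 z) z := by
  have h0 : HasDerivAt (fun z : ℂ => 1 - z) (-1) z := by
    simpa using (hasDerivAt_id z).const_sub 1
  have := (h0.cpow_const (c := -(3 / 2 : ℂ)) (Or.inl (one_sub_re_pos h))).const_mul (1/2 : ℂ)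
  have e : (-(3/2 : ℂ) - 1) = -(5/2 : ℂ) := by norm_num
  unfold Sf1 Sf2
  refine this.congr_deriv ?_
  rw [e]; ring

lemma hd_Wf {z : ℂ} (h : ‖z‖ < 1) : HasDerivAt Wf (Wf1 z) z := by
  have h0 : HasDerivAt (fun z : ℂ => 1 - z) (-1) z := by
    simpa using (hasDerivAt_id z).const_sub 1
  have hnum : HasDerivAt (fun z : ℂ => -4 * z) (-4) z := by
    simpa using (hasDerivAt_id z).const_mul (-4 : ℂ)
  have hden := h0.pow 2
  have hne : ((1 : ℂ) - z) ^ 2 ≠ 0 := pow_ne_zero _ (one_sub_ne h)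
  have := hnum.div hden hne
  unfold Wf Wf1
  refine this.congr_deriv (Eq.symm ?_)
  simp only [Pi.pow_apply]
  rw [div_eq_div_iff (pow_ne_zero _ (one_sub_ne h)) (pow_ne_zero _ hne)]
  push_cast
  ring

lemma hd_Wf1 {z : ℂ} (h : ‖z‖ < 1) : HasDerivAt Wf1 (Wf2 z) z := by
  have h0 : HasDerivAt (fun z : ℂ => 1 - z) (-1) z := by
    simpa using (hasDerivAt_id z).const_sub 1
  have hnum : HasDerivAt (fun z : ℂ => -4 * (1 + z)) (-4) z := by
    simpa using ((hasDerivAt_id z).const_add 1).const_mul (-4 : ℂ)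
  have hden := h0.pow 3
  have hne : ((1 : ℂ) - z) ^ 3 ≠ 0 := pow_ne_zero _ (one_sub_ne h)
  have := hnum.div hden hne
  unfold Wf1 Wf2
  refine this.congr_deriv (Eq.symm ?_)
  simp only [Pi.pow_apply]
  rw [div_eq_div_iff (pow_ne_zero _ (one_sub_ne h)) (pow_ne_zero _ hne)]
  push_cast
  ring

noncomputable def Hf0 (C : ℕ → ℂ) (n : ℕ) (z : ℂ) : ℂ := Sf0 z * (C n * Wf z ^ n)
noncomputable def Hf1 (C : ℕ → ℂ) (n : ℕ) (z : ℂ) : ℂ :=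
  Sf1 z * (C n * Wf z ^ n) + Sf0 z * (C n * ((n : ℂ) * Wf z ^ (n - 1) * Wf1 z))
noncomputable def Hf2 (C : ℕ → ℂ) (n : ℕ) (z : ℂ) : ℂ :=
  (Sf2 z * (C n * Wf z ^ n) + Sf1 z * (C n * ((n : ℂ) * Wf z ^ (n - 1) * Wf1 z)))
  + (Sf1 z * (C n * ((n : ℂ) * Wf z ^ (n - 1) * Wf1 z))
     + Sf0 z * (C n * (((n : ℂ) * (((n - 1 : ℕ) : ℂ) * Wf z ^ (n - 1 - 1) * Wf1 z)) * Wf1 z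
                 + ((n : ℂ) * Wf z ^ (n - 1)) * Wf2 z)))

lemma hd_Hf0 (C : ℕ → ℂ) (n : ℕ) {z : ℂ} (h : ‖z‖ < 1) :
    HasDerivAt (Hf0 C n) (Hf1 C n z) z := by
  have := (hd_Sf0 h).mul (((hd_Wf h).pow n).const_mul (C n))
  unfold Hf0 Hf1
  exact this

lemma hd_Hf1 (C : ℕ → ℂ) (n : ℕ) {z : ℂ} (h : ‖z‖ < 1) :
    HasDerivAt (Hf1 C n) (Hf2 C n z) z := by
  have h1 := (hd_Sf1 h).mul (((hd_Wf h).pow n).const_mul (C n))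
  have inner : HasDerivAt (fun z => (n : ℂ) * Wf z ^ (n - 1) * Wf1 z)
      (((n : ℂ) * (((n - 1 : ℕ) : ℂ) * Wf z ^ (n - 1 - 1) * Wf1 z)) * Wf1 z
        + ((n : ℂ) * Wf z ^ (n - 1)) * Wf2 z) z :=
    (((hd_Wf h).pow (n - 1)).const_mul (n : ℂ)).mul (hd_Wf1 h)
  have h2 := (hd_Sf0 h).mul (inner.const_mul (C n))
  have := h1.add h2
  unfold Hf1 Hf2
  exact this

lemma key_id_s18 (C : ℕ → ℂ) (n : ℕ) {z : ℂ} (h : ‖z‖ < 1) :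
    z * Hf1 C n z + z ^ 2 * Hf2 C n z
      = Sf0 z * (C n *
          ((n : ℂ) ^ 2 * (1 + z) ^ 2 / (1 - z) ^ 2
            + (n : ℂ) * (z * (3 + z) / (1 - z) ^ 2)
            + z * (2 + z) / (4 * (1 - z) ^ 2)) * Wf z ^ n) := by
  have hz := one_sub_ne h
  obtain ⟨y, rfl⟩ : ∃ y, z = 1 - y := ⟨1 - z, by ring⟩
  have hy : y ≠ 0 := by
    intro h0
    apply hz
    rw [h0]; ring
  have e : (1 : ℂ) - (1 - y) = y := by ring
  unfold Hf1 Hf2 Sf0 Sf1 Sf2 Wf Wf1 Wf2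
  rw [e]
  have hS3 : (y : ℂ) ^ (-(3 / 2 : ℂ)) = y ^ (-(1 / 2 : ℂ)) / y := by
    rw [show (-(3/2 : ℂ)) = -(1/2 : ℂ) + (-1) by norm_num, Complex.cpow_add _ _ hy,
      Complex.cpow_neg_one, ← div_eq_mul_inv]
  have hS5 : (y : ℂ) ^ (-(5 / 2 : ℂ)) = y ^ (-(1 / 2 : ℂ)) / y ^ 2 := by
    have h2 : (y : ℂ) ^ (-((2:ℕ) : ℂ)) = (y ^ (2:ℕ))⁻¹ := by
      rw [Complex.cpow_neg, Complex.cpow_natCast]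
    rw [show (-(5/2 : ℂ)) = -(1/2 : ℂ) + (-((2:ℕ) : ℂ)) by norm_num, Complex.cpow_add _ _ hy,
      h2, ← div_eq_mul_inv]
  rw [hS3, hS5]
  set S := (y : ℂ) ^ (-(1 / 2 : ℂ)) with hS
  match n with
  | 0 =>
    norm_num
    field_simp [hy]
    ring
  | 1 =>
    norm_num
    field_simp [hy]
    have hc : (y⁻¹ : ℂ) ^ 16 * y ^ 16 = 1 := by
      rw [inv_pow]; exact inv_mul_cancel₀ (pow_ne_zero _ hy)
    linear_combination
  | (m + 2) =>
    have e1 : m + 2 - 1 = m + 1 := rfl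
    have e2 : m + 1 - 1 = m := rfl
    rw [e1, e2]
    push_cast
    simp only [pow_add, pow_one]
    generalize (-4 * (1 - y) / y ^ 2) ^ m = A
    generalize C (m + 2) = c
    simp only [div_eq_mul_inv, mul_inv, inv_pow]
    field_simp [hy]
    have hc : (y⁻¹ : ℂ) ^ 30 * y ^ 30 = 1 := by
      rw [inv_pow]; exact inv_mul_cancel₀ (pow_ne_zero _ hy)
    linear_combination



/-- Termwise action of `θ² = (z d/dz)²` on
`g(z) = (1-z)^{-1/2} Σ C_n (-4z/(1-z)²)ⁿ` in a neighbourhood of the origin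
(excluding `z = 1`), under hypotheses (geometric growth of `C_n` and
`r·|4z/(1-z)²| < 1`) guaranteeing absolute convergence and the validity of
termwise differentiation. -/
theorem theta_sq_termwise
    (C : ℕ → ℂ) (M r : ℝ) (hr : 0 < r)
    (hC : ∀ n : ℕ, ‖C n‖ ≤ M * r ^ n)
    (ε : ℝ) (hε : 0 < ε) (hε1 : ε ≤ 1)
    (hconv : ∀ z ∈ Metric.ball (0 : ℂ) ε, r * ‖4 * z / (1 - z) ^ 2‖ < 1)
    (g : ℂ → ℂ)
    (hg : ∀ z ∈ Metric.ball (0 : ℂ) ε,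
      g z = (1 - z) ^ (-(1 / 2 : ℂ)) * ∑' (n : ℕ), C n * (-4 * z / (1 - z) ^ 2) ^ n) :
    ∀ z ∈ Metric.ball (0 : ℂ) ε,
      z * deriv (fun w : ℂ => w * deriv g w) z
        = (1 - z) ^ (-(1 / 2 : ℂ)) *
          ∑' (n : ℕ),
            C n *
              ((n : ℂ) ^ 2 * (1 + z) ^ 2 / (1 - z) ^ 2
                + (n : ℂ) * (z * (3 + z) / (1 - z) ^ 2)
                + z * (2 + z) / (4 * (1 - z) ^ 2)) *
              (-4 * z / (1 - z) ^ 2) ^ n := by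
  intro z₀ hz₀
  have hM : 0 ≤ M := by
    have h1 := (norm_nonneg (C 0)).trans (hC 0)
    simpa using h1
  have hz₀ε : ‖z₀‖ < ε := mem_ball_zero_iff.1 hz₀
  set δ : ℝ := (ε - ‖z₀‖) / 2 with hδdef
  have hδ : 0 < δ := by
    rw [hδdef]; linarith
  set cb := Metric.closedBall z₀ δ with hcb
  have hsub : cb ⊆ Metric.ball (0 : ℂ) ε := by
    intro z hzc
    rw [mem_ball_zero_iff]
    have h1 : ‖z - z₀‖ ≤ δ := by
      rw [← dist_eq_norm]; exact Metric.mem_closedBall.1 hzc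
    have h2 : ‖z‖ ≤ ‖z - z₀‖ + ‖z₀‖ := by
      calc ‖z‖ = ‖(z - z₀) + z₀‖ := by ring_nf
        _ ≤ ‖z - z₀‖ + ‖z₀‖ := norm_add_le _ _
    rw [hδdef] at h1
    linarith
  have hcb1 : ∀ z ∈ cb, ‖z‖ < 1 := fun z hz =>
    lt_of_lt_of_le (mem_ball_zero_iff.1 (hsub hz)) hε1
  have hz₀cb : z₀ ∈ cb := Metric.mem_closedBall_self hδ.le
  have hz₀1 : ‖z₀‖ < 1 := hcb1 z₀ hz₀cb
  -- continuity of the auxiliary functions on cb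
  have hcW : ContinuousOn Wf cb := fun z hz =>
    (hd_Wf (hcb1 z hz)).continuousAt.continuousWithinAt
  have hcW1 : ContinuousOn Wf1 cb := fun z hz =>
    (hd_Wf1 (hcb1 z hz)).continuousAt.continuousWithinAt
  have hcW2 : ContinuousOn Wf2 cb := by
    intro z hz
    have h : ‖z‖ < 1 := hcb1 z hz
    have h0 : HasDerivAt (fun z : ℂ => 1 - z) (-1) z := by
      simpa using (hasDerivAt_id z).const_sub 1
    have hnum : HasDerivAt (fun z : ℂ => -8 * (2 + z)) (-8) z := by
      simpa using ((hasDerivAt_id z).const_add 2).const_mul (-8 : ℂ)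
    exact ((hnum.div (h0.pow 4) (pow_ne_zero _ (one_sub_ne h))).continuousAt).continuousWithinAt
  have hcS0 : ContinuousOn Sf0 cb := fun z hz =>
    (hd_Sf0 (hcb1 z hz)).continuousAt.continuousWithinAt
  have hcS1 : ContinuousOn Sf1 cb := fun z hz =>
    (hd_Sf1 (hcb1 z hz)).continuousAt.continuousWithinAt
  have hcS2 : ContinuousOn Sf2 cb := by
    intro z hz
    have h : ‖z‖ < 1 := hcb1 z hz
    have h0 : HasDerivAt (fun z : ℂ => 1 - z) (-1) z := by
      simpa using (hasDerivAt_id z).const_sub 1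
    exact (((h0.cpow_const (Or.inl (one_sub_re_pos h))).const_mul
      (3 / 4 : ℂ)).continuousAt).continuousWithinAt
  have hcompact : IsCompact cb := isCompact_closedBall z₀ δ
  have hne : cb.Nonempty := ⟨z₀, hz₀cb⟩
  -- the geometric ratio bound Q
  obtain ⟨zQ, hzQmem, hzQmax⟩ :=
    hcompact.exists_isMaxOn hne (continuousOn_const.mul hcW.norm)
  set Q : ℝ := max (r * ‖Wf zQ‖) (1 / 2) with hQdef
  have hQ0 : 0 < Q := lt_of_lt_of_le (by norm_num) (le_max_right _ _)
  have hQ1 : Q < 1 := by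
    apply max_lt _ (by norm_num)
    have h1 := hconv zQ (hsub hzQmem)
    have h2 : ‖Wf zQ‖ = ‖4 * zQ / (1 - zQ) ^ 2‖ := by
      rw [show Wf zQ = -(4 * zQ / (1 - zQ) ^ 2) by rw [Wf]; ring, norm_neg]
    rw [h2]; exact h1
  have hQle : ∀ z ∈ cb, r * ‖Wf z‖ ≤ Q := fun z hz =>
    le_trans (hzQmax hz) (le_max_left _ _)
  have hWle : ∀ z ∈ cb, ‖Wf z‖ ≤ Q / r := fun z hz => by
    rw [le_div_iff₀ hr]
    calc ‖Wf z‖ * r = r * ‖Wf z‖ := by ring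
      _ ≤ Q := hQle z hz
  have hQr0 : 0 ≤ Q / r := le_trans (norm_nonneg _) (hWle z₀ hz₀cb)
  -- the uniform bound K
  have hFcont : ContinuousOn
      (fun z : ℂ => ‖Sf0 z‖ + ‖Sf1 z‖ + ‖Sf2 z‖ + ‖Wf1 z‖ + ‖Wf2 z‖ + 1) cb :=
    ((((hcS0.norm.add hcS1.norm).add hcS2.norm).add hcW1.norm).add hcW2.norm).add
      continuousOn_const
  obtain ⟨zK, hzKmem, hzKmax⟩ := hcompact.exists_isMaxOn hne hFcont
  set K : ℝ := ‖Sf0 zK‖ + ‖Sf1 zK‖ + ‖Sf2 zK‖ + ‖Wf1 zK‖ + ‖Wf2 zK‖ + 1 with hKdef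
  have hK1 : 1 ≤ K := by
    rw [hKdef]
    have := norm_nonneg (Sf0 zK); have := norm_nonneg (Sf1 zK); have := norm_nonneg (Sf2 zK)
    have := norm_nonneg (Wf1 zK); have := norm_nonneg (Wf2 zK)
    linarith
  have hK0 : 0 ≤ K := le_trans zero_le_one hK1
  have hKS0 : ∀ z ∈ cb, ‖Sf0 z‖ ≤ K := fun z hz => by
    have h1 : ‖Sf0 z‖ + ‖Sf1 z‖ + ‖Sf2 z‖ + ‖Wf1 z‖ + ‖Wf2 z‖ + 1 ≤ K := by
      rw [hKdef]; exact hzKmax hz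
    have := norm_nonneg (Sf1 z); have := norm_nonneg (Sf2 z)
    have := norm_nonneg (Wf1 z); have := norm_nonneg (Wf2 z)
    rw [hKdef]; linarith
  have hKS1 : ∀ z ∈ cb, ‖Sf1 z‖ ≤ K := fun z hz => by
    have h1 : ‖Sf0 z‖ + ‖Sf1 z‖ + ‖Sf2 z‖ + ‖Wf1 z‖ + ‖Wf2 z‖ + 1 ≤ K := by
      rw [hKdef]; exact hzKmax hz
    have := norm_nonneg (Sf0 z); have := norm_nonneg (Sf2 z)
    have := norm_nonneg (Wf1 z); have := norm_nonneg (Wf2 z)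
    rw [hKdef]; linarith
  have hKS2 : ∀ z ∈ cb, ‖Sf2 z‖ ≤ K := fun z hz => by
    have h1 : ‖Sf0 z‖ + ‖Sf1 z‖ + ‖Sf2 z‖ + ‖Wf1 z‖ + ‖Wf2 z‖ + 1 ≤ K := by
      rw [hKdef]; exact hzKmax hz
    have := norm_nonneg (Sf0 z); have := norm_nonneg (Sf1 z)
    have := norm_nonneg (Wf1 z); have := norm_nonneg (Wf2 z)
    rw [hKdef]; linarith
  have hKW1 : ∀ z ∈ cb, ‖Wf1 z‖ ≤ K := fun z hz => by
    have h1 : ‖Sf0 z‖ + ‖Sf1 z‖ + ‖Sf2 z‖ + ‖Wf1 z‖ + ‖Wf2 z‖ + 1 ≤ K := by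
      rw [hKdef]; exact hzKmax hz
    have := norm_nonneg (Sf0 z); have := norm_nonneg (Sf1 z)
    have := norm_nonneg (Sf2 z); have := norm_nonneg (Wf2 z)
    rw [hKdef]; linarith
  have hKW2 : ∀ z ∈ cb, ‖Wf2 z‖ ≤ K := fun z hz => by
    have h1 : ‖Sf0 z‖ + ‖Sf1 z‖ + ‖Sf2 z‖ + ‖Wf1 z‖ + ‖Wf2 z‖ + 1 ≤ K := by
      rw [hKdef]; exact hzKmax hz
    have := norm_nonneg (Sf0 z); have := norm_nonneg (Sf1 z)
    have := norm_nonneg (Sf2 z); have := norm_nonneg (Wf1 z)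
    rw [hKdef]; linarith
  -- elementary norm bounds for the series terms
  have hb0 : ∀ n : ℕ, ∀ z ∈ cb, ‖C n * Wf z ^ n‖ ≤ M * Q ^ n := by
    intro n z hz
    have h1 : ‖C n * Wf z ^ n‖ ≤ (M * r ^ n) * ((Q / r) ^ n) := by
      rw [norm_mul, norm_pow]
      exact mul_le_mul (hC n) (pow_le_pow_left₀ (norm_nonneg _) (hWle z hz) n)
        (pow_nonneg (norm_nonneg _) n) (by positivity)
    calc ‖C n * Wf z ^ n‖ ≤ (M * r ^ n) * ((Q / r) ^ n) := h1
      _ = M * Q ^ n := by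
          rw [mul_assoc, ← mul_pow, mul_div_cancel₀ _ (ne_of_gt hr)]
  have hb1 : ∀ n : ℕ, ∀ z ∈ cb,
      ‖C n * ((n : ℂ) * Wf z ^ (n - 1) * Wf1 z)‖ ≤ K * M * r * ((n : ℝ) * Q ^ (n - 1)) := by
    intro n z hz
    have h1 : ‖C n * ((n : ℂ) * Wf z ^ (n - 1) * Wf1 z)‖
        ≤ (M * r ^ n) * ((n : ℝ) * (Q / r) ^ (n - 1) * K) := by
      rw [norm_mul, norm_mul, norm_mul, norm_pow, Complex.norm_natCast]
      apply mul_le_mul (hC n) _ (by positivity) (by positivity)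
      apply mul_le_mul _ (hKW1 z hz) (norm_nonneg _) (by positivity)
      exact mul_le_mul le_rfl (pow_le_pow_left₀ (norm_nonneg _) (hWle z hz) _)
        (pow_nonneg (norm_nonneg _) _) (Nat.cast_nonneg n)
    refine h1.trans (le_of_eq ?_)
    match n with
    | 0 => simp
    | (m + 1) =>
      have key : r ^ (m + 1) * (Q / r) ^ m = r * Q ^ m := by
        rw [pow_succ, mul_comm (r ^ m) r, mul_assoc, ← mul_pow,
          mul_div_cancel₀ _ (ne_of_gt hr)]
      have e1 : m + 1 - 1 = m := rfl
      rw [e1]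
      push_cast
      linear_combination (M * ((m : ℝ) + 1) * K) * key
  have hb2 : ∀ n : ℕ, ∀ z ∈ cb,
      ‖C n * (((n : ℂ) * (((n - 1 : ℕ) : ℂ) * Wf z ^ (n - 1 - 1) * Wf1 z)) * Wf1 z
          + ((n : ℂ) * Wf z ^ (n - 1)) * Wf2 z)‖
        ≤ K * K * M * (r * r) * ((n : ℝ) * (n : ℝ) * Q ^ (n - 2))
          + K * M * r * ((n : ℝ) * Q ^ (n - 1)) := by
    intro n z hz
    have hsplit : ‖C n * (((n : ℂ) * (((n - 1 : ℕ) : ℂ) * Wf z ^ (n - 1 - 1) * Wf1 z)) * Wf1 z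
          + ((n : ℂ) * Wf z ^ (n - 1)) * Wf2 z)‖
        ≤ ‖C n * (((n : ℂ) * (((n - 1 : ℕ) : ℂ) * Wf z ^ (n - 1 - 1) * Wf1 z)) * Wf1 z)‖
          + ‖C n * (((n : ℂ) * Wf z ^ (n - 1)) * Wf2 z)‖ := by
      rw [mul_add]; exact norm_add_le _ _
    refine hsplit.trans (add_le_add ?_ ?_)
    · -- second-derivative (n)(n-1) term
      have h1 : ‖C n * (((n : ℂ) * (((n - 1 : ℕ) : ℂ) * Wf z ^ (n - 1 - 1) * Wf1 z)) * Wf1 z)‖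
          ≤ (M * r ^ n) * (((n : ℝ) * (((n - 1 : ℕ) : ℝ) * (Q / r) ^ (n - 1 - 1) * K)) * K) := by
        rw [norm_mul, norm_mul, norm_mul, norm_mul, norm_mul, norm_pow,
          Complex.norm_natCast, Complex.norm_natCast]
        apply mul_le_mul (hC n) _ (by positivity) (by positivity)
        apply mul_le_mul _ (hKW1 z hz) (norm_nonneg _) (by positivity)
        apply mul_le_mul le_rfl _ (by positivity) (Nat.cast_nonneg n)
        apply mul_le_mul _ (hKW1 z hz) (norm_nonneg _) (by positivity)
        exact mul_le_mul le_rfl (pow_le_pow_left₀ (norm_nonneg _) (hWle z hz) _)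
          (pow_nonneg (norm_nonneg _) _) (Nat.cast_nonneg _)
      refine h1.trans ?_
      match n with
      | 0 => simp
      | 1 => simp; positivity
      | (m + 2) =>
        have e1 : m + 2 - 1 = m + 1 := rfl
        have e2 : m + 1 - 1 = m := rfl
        have e3 : m + 2 - 2 = m := rfl
        rw [e1, e2, e3]
        have key : r ^ (m + 2) * (Q / r) ^ m = (r * r) * Q ^ m := by
          rw [show m + 2 = m + 1 + 1 from rfl, pow_succ, pow_succ, mul_comm (r ^ m * r) r,
            ← mul_assoc, mul_comm r (r ^ m)]
          rw [mul_assoc (r ^ m) r r, mul_comm (r ^ m) (r * r), mul_assoc, ← mul_pow,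
            mul_div_cancel₀ _ (ne_of_gt hr)]
        have step1 : (M * r ^ (m + 2)) * ((((m + 2 : ℕ) : ℝ) * (((m + 1 : ℕ) : ℝ)
              * (Q / r) ^ m * K)) * K)
            = K * K * M * (r * r) * (((m + 2 : ℕ) : ℝ) * ((m + 1 : ℕ) : ℝ) * Q ^ m) := by
          push_cast
          linear_combination (M * (((m : ℝ) + 2) * ((m : ℝ) + 1)) * K * K) * key
        rw [step1]
        have hmono : (((m + 2 : ℕ) : ℝ) * ((m + 1 : ℕ) : ℝ) * Q ^ m)
            ≤ (((m + 2 : ℕ) : ℝ) * ((m + 2 : ℕ) : ℝ) * Q ^ m) := by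
          push_cast
          have : (0:ℝ) ≤ Q ^ m := by positivity
          nlinarith [Nat.cast_nonneg (α := ℝ) m]
        calc K * K * M * (r * r) * (((m + 2 : ℕ) : ℝ) * ((m + 1 : ℕ) : ℝ) * Q ^ m)
            ≤ K * K * M * (r * r) * (((m + 2 : ℕ) : ℝ) * ((m + 2 : ℕ) : ℝ) * Q ^ m) := by
              apply mul_le_mul_of_nonneg_left hmono (by positivity)
          _ = K * K * M * (r * r) * (((m + 2 : ℕ) : ℝ) * ((m + 2 : ℕ) : ℝ) * Q ^ (m + 2 - 2)) := rfl
    · -- first-derivative times W2 term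
      have h1 : ‖C n * (((n : ℂ) * Wf z ^ (n - 1)) * Wf2 z)‖
          ≤ (M * r ^ n) * (((n : ℝ) * (Q / r) ^ (n - 1)) * K) := by
        rw [norm_mul, norm_mul, norm_mul, norm_pow, Complex.norm_natCast]
        apply mul_le_mul (hC n) _ (by positivity) (by positivity)
        apply mul_le_mul _ (hKW2 z hz) (norm_nonneg _) (by positivity)
        exact mul_le_mul le_rfl (pow_le_pow_left₀ (norm_nonneg _) (hWle z hz) _)
          (pow_nonneg (norm_nonneg _) _) (Nat.cast_nonneg _)
      refine h1.trans (le_of_eq ?_)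
      match n with
      | 0 => simp
      | (m + 1) =>
        have key : r ^ (m + 1) * (Q / r) ^ m = r * Q ^ m := by
          rw [pow_succ, mul_comm (r ^ m) r, mul_assoc, ← mul_pow,
            mul_div_cancel₀ _ (ne_of_gt hr)]
        have e1 : m + 1 - 1 = m := rfl
        rw [e1]
        push_cast
        linear_combination (M * ((m : ℝ) + 1) * K) * key
  -- the dominating summable sequences
  set u1 : ℕ → ℝ := fun n => K * (M * Q ^ n) + K * (K * M * r * ((n : ℝ) * Q ^ (n - 1)))
    with hu1def
  set u2 : ℕ → ℝ := fun n =>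
      (K * (M * Q ^ n) + K * (K * M * r * ((n : ℝ) * Q ^ (n - 1))))
      + (K * (K * M * r * ((n : ℝ) * Q ^ (n - 1)))
         + K * (K * K * M * (r * r) * ((n : ℝ) * (n : ℝ) * Q ^ (n - 2))
                + K * M * r * ((n : ℝ) * Q ^ (n - 1))))
    with hu2def
  have hQn : ‖Q‖ < 1 := by rw [Real.norm_eq_abs, abs_of_pos hQ0]; exact hQ1
  have sgeo : Summable fun n : ℕ => Q ^ n := summable_geometric_of_lt_one hQ0.le hQ1
  have s1 : Summable fun n : ℕ => (n : ℝ) * Q ^ (n - 1) := by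
    have base : Summable fun n : ℕ => (n : ℝ) ^ 1 * Q ^ n :=
      summable_pow_mul_geometric_of_norm_lt_one 1 hQn
    apply Summable.of_nonneg_of_le (fun n => by positivity)
      (fun n => ?_) (base.mul_left (1 / Q))
    match n with
    | 0 => simp
    | (m + 1) =>
      have e1 : m + 1 - 1 = m := rfl
      rw [e1]
      have he : (1 / Q) * (((m + 1 : ℕ) : ℝ) ^ 1 * Q ^ (m + 1)) = ((m + 1 : ℕ) : ℝ) * Q ^ m := by
        field_simp [hQ0.ne']
        ring
      rw [he]
  have s2 : Summable fun n : ℕ => (n : ℝ) * (n : ℝ) * Q ^ (n - 2) := by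
    have base : Summable fun n : ℕ => (n : ℝ) ^ 2 * Q ^ n :=
      summable_pow_mul_geometric_of_norm_lt_one 2 hQn
    apply Summable.of_nonneg_of_le (fun n => by positivity)
      (fun n => ?_) (base.mul_left (1 / (Q * Q)))
    match n with
    | 0 => simp
    | 1 =>
      have he : (1 / (Q * Q)) * (((1 : ℕ) : ℝ) ^ 2 * Q ^ (1 : ℕ)) = 1 / Q := by
        field_simp [hQ0.ne']
        norm_num
      rw [he]
      have h1Q : (1 : ℝ) ≤ 1 / Q := by
        rw [le_div_iff₀ hQ0]; linarith
      simpa using h1Q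
    | (m + 2) =>
      have e1 : m + 2 - 2 = m := rfl
      rw [e1]
      have he : (1 / (Q * Q)) * (((m + 2 : ℕ) : ℝ) ^ 2 * Q ^ (m + 2))
          = ((m + 2 : ℕ) : ℝ) * ((m + 2 : ℕ) : ℝ) * Q ^ m := by
        field_simp [hQ0.ne']
        ring
      rw [he]
  have su1 : Summable u1 := by
    rw [hu1def]
    exact ((sgeo.mul_left M).mul_left K).add (((s1.mul_left (K * M * r)).mul_left K))
  have su2 : Summable u2 := by
    rw [hu2def]
    exact (((sgeo.mul_left M).mul_left K).add ((s1.mul_left (K * M * r)).mul_left K)).add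
      (((s1.mul_left (K * M * r)).mul_left K).add
        (((s2.mul_left (K * K * M * (r * r))).add (s1.mul_left (K * M * r))).mul_left K))
  -- uniform bounds for the termwise derivatives on cb
  have hbnd1 : ∀ n : ℕ, ∀ z ∈ cb, ‖Hf1 C n z‖ ≤ u1 n := by
    intro n z hz
    rw [Hf1]
    refine (norm_add_le _ _).trans (_root_.add_le_add ?_ ?_)
    · rw [norm_mul]
      exact mul_le_mul (hKS1 z hz) (hb0 n z hz) (norm_nonneg _) hK0
    · rw [norm_mul]
      exact mul_le_mul (hKS0 z hz) (hb1 n z hz) (norm_nonneg _) hK0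
  have hbnd2 : ∀ n : ℕ, ∀ z ∈ cb, ‖Hf2 C n z‖ ≤ u2 n := by
    intro n z hz
    rw [Hf2]
    refine (norm_add_le _ _).trans (_root_.add_le_add ((norm_add_le _ _).trans
      (_root_.add_le_add ?_ ?_)) ((norm_add_le _ _).trans (_root_.add_le_add ?_ ?_)))
    · rw [norm_mul]
      exact mul_le_mul (hKS2 z hz) (hb0 n z hz) (norm_nonneg _) hK0
    · rw [norm_mul]
      exact mul_le_mul (hKS1 z hz) (hb1 n z hz) (norm_nonneg _) hK0
    · rw [norm_mul]
      exact mul_le_mul (hKS1 z hz) (hb1 n z hz) (norm_nonneg _) hK0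
    · rw [norm_mul]
      exact mul_le_mul (hKS0 z hz) (hb2 n z hz) (norm_nonneg _) hK0
  -- the open ball t on which we differentiate
  have htopen : IsOpen (Metric.ball z₀ δ) := Metric.isOpen_ball
  have htconn : IsPreconnected (Metric.ball z₀ δ) := (convex_ball z₀ δ).isPreconnected
  have htsub : Metric.ball z₀ δ ⊆ cb := Metric.ball_subset_closedBall
  have hz₀t : z₀ ∈ Metric.ball z₀ δ := Metric.mem_ball_self hδ
  -- g agrees with the sum of the Hf0's near z₀
  have geq : ∀ y ∈ Metric.ball (0 : ℂ) ε, g y = ∑' n, Hf0 C n y := by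
    intro y hy
    rw [hg y hy]
    simp only [Hf0, Sf0, Wf]
    exact tsum_mul_left.symm
  have hsum0 : Summable fun n => Hf0 C n z₀ := by
    apply Summable.of_norm_bounded ((sgeo.mul_left M).mul_left K)
    intro n
    rw [Hf0, norm_mul]
    exact mul_le_mul (hKS0 z₀ hz₀cb) (hb0 n z₀ hz₀cb) (norm_nonneg _) hK0
  -- first termwise differentiation
  have hgd : ∀ y ∈ Metric.ball z₀ δ, HasDerivAt g (∑' n, Hf1 C n y) y := by
    intro y hy
    have h1 : HasDerivAt (fun u => ∑' n, Hf0 C n u) (∑' n, Hf1 C n y) y :=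
      hasDerivAt_tsum_of_isPreconnected su1 htopen htconn
        (fun n u hu => hd_Hf0 C n (hcb1 u (htsub hu)))
        (fun n u hu => hbnd1 n u (htsub hu)) hz₀t hsum0 hy
    exact h1.congr_of_eventuallyEq (Filter.eventuallyEq_of_mem
      (Metric.isOpen_ball.mem_nhds ((htsub.trans hsub) hy))
      (fun u hu => geq u hu))
  have hgd' : ∀ y ∈ Metric.ball z₀ δ, deriv g y = ∑' n, Hf1 C n y :=
    fun y hy => (hgd y hy).deriv
  have hsum1 : Summable fun n => Hf1 C n z₀ :=
    Summable.of_norm_bounded su1 (fun n => hbnd1 n z₀ hz₀cb)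
  have hsum2 : Summable fun n => Hf2 C n z₀ :=
    Summable.of_norm_bounded su2 (fun n => hbnd2 n z₀ hz₀cb)
  -- second termwise differentiation
  have hT2 : HasDerivAt (fun u => ∑' n, Hf1 C n u) (∑' n, Hf2 C n z₀) z₀ :=
    hasDerivAt_tsum_of_isPreconnected su2 htopen htconn
      (fun n u hu => hd_Hf1 C n (hcb1 u (htsub hu)))
      (fun n u hu => hbnd2 n u (htsub hu)) hz₀t hsum1 hz₀t
  have hphi : HasDerivAt (fun u => u * ∑' n, Hf1 C n u)
      (1 * (∑' n, Hf1 C n z₀) + z₀ * (∑' n, Hf2 C n z₀)) z₀ :=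
    (hasDerivAt_id z₀).mul hT2
  have hfinal : HasDerivAt (fun u => u * deriv g u)
      (1 * (∑' n, Hf1 C n z₀) + z₀ * (∑' n, Hf2 C n z₀)) z₀ := by
    apply hphi.congr_of_eventuallyEq
    exact Filter.eventuallyEq_of_mem (htopen.mem_nhds hz₀t)
      (fun u hu => by rw [hgd' u hu])
  rw [hfinal.deriv]
  -- final algebraic rearrangement
  have hmul1 : Summable fun n => z₀ * Hf1 C n z₀ := hsum1.mul_left z₀
  have hmul2 : Summable fun n => z₀ ^ 2 * Hf2 C n z₀ := hsum2.mul_left (z₀ ^ 2)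
  calc z₀ * (1 * (∑' n, Hf1 C n z₀) + z₀ * (∑' n, Hf2 C n z₀))
      = z₀ * (∑' n, Hf1 C n z₀) + z₀ ^ 2 * (∑' n, Hf2 C n z₀) := by ring
    _ = ∑' n, (z₀ * Hf1 C n z₀ + z₀ ^ 2 * Hf2 C n z₀) := by
        rw [Summable.tsum_add hmul1 hmul2, tsum_mul_left, tsum_mul_left]
    _ = ∑' n, Sf0 z₀ * (C n *
          ((n : ℂ) ^ 2 * (1 + z₀) ^ 2 / (1 - z₀) ^ 2
            + (n : ℂ) * (z₀ * (3 + z₀) / (1 - z₀) ^ 2)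
            + z₀ * (2 + z₀) / (4 * (1 - z₀) ^ 2)) * Wf z₀ ^ n) :=
        tsum_congr (fun n => key_id_s18 C n hz₀1)
    _ = Sf0 z₀ * ∑' n, (C n *
          ((n : ℂ) ^ 2 * (1 + z₀) ^ 2 / (1 - z₀) ^ 2
            + (n : ℂ) * (z₀ * (3 + z₀) / (1 - z₀) ^ 2)
            + z₀ * (2 + z₀) / (4 * (1 - z₀) ^ 2)) * Wf z₀ ^ n) := tsum_mul_left
    _ = (1 - z₀) ^ (-(1 / 2 : ℂ)) * ∑' (n : ℕ), C n *
          ((n : ℂ) ^ 2 * (1 + z₀) ^ 2 / (1 - z₀) ^ 2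
            + (n : ℂ) * (z₀ * (3 + z₀) / (1 - z₀) ^ 2)
            + z₀ * (2 + z₀) / (4 * (1 - z₀) ^ 2)) *
          (-4 * z₀ / (1 - z₀) ^ 2) ^ n := by
        simp only [Sf0, Wf]
end
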